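/- arXiv:math/0605390 — 4 statements merged into one kernel-verified Lean document; each statement's English description precedes it below -/
import Mathlib

section
/- For all n ≥ k ≥ 1, the q-Stirling numbers of the second kind satisfy the generating function identity (as formal power series in a): a^k · q^{binom(k,2)} · [k]_q! / Π_{i=1}^k (1 − a·[i]_q) = Σ_{n≥k} [k]_q!·S_q(n,k)·a^n, equivalently a^k · q^{binom(k,2)} / Π_{i=1}^k (1 − a·[i]_q) = Σ_{n≥k} S_q(n,k)·a^n. -/
noncomputable section

/-- The `q`-integer `[k]_q = 1 + q + ⋯ + q^{k-1}` as a polynomial in `q`. -/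
def qint (k : ℕ) : Polynomial ℚ := ∑ i ∈ Finset.range k, Polynomial.X ^ i

/-- The `q`-factorial `[k]_q!`. -/
def qfact (k : ℕ) : Polynomial ℚ := ∏ i ∈ Finset.Icc 1 k, qint i

/-- The `q`-Stirling numbers of the second kind:
`S_q(n,k) = q^{k-1} S_q(n-1,k-1) + [k]_q S_q(n-1,k)` with `S_q(n,k) = δ_{nk}` if `n=0` or `k=0`. -/
def Sq : ℕ → ℕ → Polynomial ℚ
  | 0, 0 => 1
  | 0, _+1 => 0
  | _+1, 0 => 0
  | n+1, k+1 => Polynomial.X ^ k * Sq n k + qint (k+1) * Sq n (k+1)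

/-!
Write `F_k(a) = ∑ₙ S_q(n,k) aⁿ`. Comparing coefficients, the recurrence for `S_q` says exactly
that `(1 - [k+1]_q a) F_{k+1} = q^k a F_k`, and `F_0 = 1`. Multiplying these relations for
`0 ≤ j < k` gives `∏_{i=1}^k (1 - [i]_q a) F_k = q^{0+1+⋯+(k-1)} aᵏ = q^{C(k,2)} aᵏ`; the version
with `[k]_q!` follows by scaling with that constant.
-/

section

open PowerSeries

lemma PowerSeries.mk_const_mul {R : Type*} [Semiring R] (c : R) (f : ℕ → R) :
    mk (fun n => c * f n) = C c * mk f := by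
  ext n
  simp only [coeff_C_mul, coeff_mk]

lemma mk_Sq_zero : mk (fun n => Sq n 0) = (1 : PowerSeries (Polynomial ℚ)) := by
  refine PowerSeries.ext fun n => ?_
  rcases n with _ | n
  · simp [Sq]
  · simp [Sq, coeff_one]

lemma one_sub_qint_mul_mk_Sq_succ (k : ℕ) :
    (1 - C (qint (k + 1)) * X) * mk (fun n => Sq n (k + 1)) =
      C (Polynomial.X ^ k) * X * mk (fun n => Sq n k) := by
  refine PowerSeries.ext fun n => ?_
  rcases n with _ | n
  · simp [Sq]
  · rw [sub_mul, one_mul, map_sub, mul_assoc, mul_assoc, coeff_C_mul, coeff_C_mul,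
      coeff_succ_X_mul, coeff_succ_X_mul, coeff_mk, coeff_mk, coeff_mk]
    change Polynomial.X ^ k * Sq n k + qint (k + 1) * Sq n (k + 1) - _ = _
    ring

lemma prod_one_sub_qint_mul_mk_Sq (k : ℕ) :
    (∏ i ∈ Finset.Icc 1 k, (1 - C (qint i) * X)) * mk (fun n => Sq n k) =
      C (Polynomial.X ^ k.choose 2) * X ^ k := by
  induction k with
  | zero => simp [mk_Sq_zero]
  | succ k ih =>
    calc (∏ i ∈ Finset.Icc 1 (k + 1), (1 - C (qint i) * X)) * mk (fun n => Sq n (k + 1))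
        = (∏ i ∈ Finset.Icc 1 k, (1 - C (qint i) * X)) *
            ((1 - C (qint (k + 1)) * X) * mk (fun n => Sq n (k + 1))) := by
          rw [Finset.prod_Icc_succ_top (by omega), mul_assoc]
      _ = C (Polynomial.X ^ k) * X *
            ((∏ i ∈ Finset.Icc 1 k, (1 - C (qint i) * X)) * mk (fun n => Sq n k)) := by
          rw [one_sub_qint_mul_mk_Sq_succ]; ring
      _ = C (Polynomial.X ^ (k + 1).choose 2) * X ^ (k + 1) := by
          rw [ih, Nat.choose_succ_succ, Nat.choose_one_right, pow_add, map_mul]; ring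

end

theorem stmt2_general (k : ℕ) :
    (PowerSeries.C (R := Polynomial ℚ) (qfact k * Polynomial.X ^ k.choose 2) *
        (PowerSeries.X : PowerSeries (Polynomial ℚ)) ^ k =
      (∏ i ∈ Finset.Icc 1 k, (1 - PowerSeries.C (R := Polynomial ℚ) (qint i) * PowerSeries.X)) *
        PowerSeries.mk (fun n => qfact k * Sq n k)) ∧
    (PowerSeries.C (R := Polynomial ℚ) (Polynomial.X ^ k.choose 2) *
        (PowerSeries.X : PowerSeries (Polynomial ℚ)) ^ k =
      (∏ i ∈ Finset.Icc 1 k, (1 - PowerSeries.C (R := Polynomial ℚ) (qint i) * PowerSeries.X)) *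
        PowerSeries.mk (fun n => Sq n k)) := by
  have h := prod_one_sub_qint_mul_mk_Sq k
  refine ⟨?_, h.symm⟩
  rw [PowerSeries.mk_const_mul, map_mul, mul_left_comm, h, mul_assoc]

/-- `a^k q^{C(k,2)} [k]_q! / ∏_{i=1}^k (1 - a[i]_q) = ∑_{n} [k]_q! S_q(n,k) a^n`, and
equivalently without the factor `[k]_q!`, as identities of formal power series in `a`
over `ℚ[q]` (the division is expressed by multiplying through by the denominator). -/
theorem stmt2 (k : ℕ) (hk : 1 ≤ k) :
    (PowerSeries.C (R := Polynomial ℚ) (qfact k * Polynomial.X ^ k.choose 2) *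
        (PowerSeries.X : PowerSeries (Polynomial ℚ)) ^ k =
      (∏ i ∈ Finset.Icc 1 k, (1 - PowerSeries.C (R := Polynomial ℚ) (qint i) * PowerSeries.X)) *
        PowerSeries.mk (fun n => qfact k * Sq n k)) ∧
    (PowerSeries.C (R := Polynomial ℚ) (Polynomial.X ^ k.choose 2) *
        (PowerSeries.X : PowerSeries (Polynomial ℚ)) ^ k =
      (∏ i ∈ Finset.Icc 1 k, (1 - PowerSeries.C (R := Polynomial ℚ) (qint i) * PowerSeries.X)) *
        PowerSeries.mk (fun n => Sq n k)) :=
  stmt2_general k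
end
end

section
/- For every ordered partition π of [n] into k blocks, mak(π) = lmak'(π) and mak'(π) = lmak(π), where mak = ros + lcs, lmak = n(k−1) − (los + rcs), mak' = lob + rcb, and lmak' = n(k−1) − (lcb + rob). -/
open Finset

/-- `B` is an ordered partition of `[n]` into `k` (nonempty, pairwise disjoint, covering)
blocks. -/
def isOP (n k : ℕ) (B : Fin k → Finset (Fin n)) : Prop :=
  (∀ j, (B j).Nonempty) ∧ (∀ j₁ j₂, j₁ ≠ j₂ → Disjoint (B j₁) (B j₂)) ∧ ∀ x, ∃ j, x ∈ B j

/-- The type of ordered partitions of `[n]` into `k` blocks. -/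
def OP (n k : ℕ) := {B : Fin k → Finset (Fin n) // isOP n k B}

namespace OP

variable {n k : ℕ}

/-- The opener (least element) of the `j`-th block. -/
def opener (π : OP n k) (j : Fin k) : Fin n := (π.1 j).min' (π.2.1 j)

/-- The closer (greatest element) of the `j`-th block. -/
def closer (π : OP n k) (j : Fin k) : Fin n := (π.1 j).max' (π.2.1 j)

/-- The index of the block containing `i`. -/
noncomputable def blk (π : OP n k) (i : Fin n) : Fin k := (π.2.2.2 i).choose

/-- `ros_i`: openers smaller than `i` in blocks to the right of `i`'s block. -/
noncomputable def ros (π : OP n k) (i : Fin n) : ℕ :=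
  (univ.filter fun j => π.blk i < j ∧ π.opener j < i).card

/-- `rob_i`: openers bigger than `i` in blocks to the right of `i`'s block. -/
noncomputable def rob (π : OP n k) (i : Fin n) : ℕ :=
  (univ.filter fun j => π.blk i < j ∧ i < π.opener j).card

/-- `rcs_i`: closers smaller than `i` in blocks to the right of `i`'s block. -/
noncomputable def rcs (π : OP n k) (i : Fin n) : ℕ :=
  (univ.filter fun j => π.blk i < j ∧ π.closer j < i).card

/-- `rcb_i`: closers bigger than `i` in blocks to the right of `i`'s block. -/
noncomputable def rcb (π : OP n k) (i : Fin n) : ℕ :=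
  (univ.filter fun j => π.blk i < j ∧ i < π.closer j).card

/-- `los_i`: openers smaller than `i` in blocks to the left of `i`'s block. -/
noncomputable def los (π : OP n k) (i : Fin n) : ℕ :=
  (univ.filter fun j => j < π.blk i ∧ π.opener j < i).card

/-- `lob_i`: openers bigger than `i` in blocks to the left of `i`'s block. -/
noncomputable def lob (π : OP n k) (i : Fin n) : ℕ :=
  (univ.filter fun j => j < π.blk i ∧ i < π.opener j).card

/-- `lcs_i`: closers smaller than `i` in blocks to the left of `i`'s block. -/
noncomputable def lcs (π : OP n k) (i : Fin n) : ℕ :=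
  (univ.filter fun j => j < π.blk i ∧ π.closer j < i).card

/-- `lcb_i`: closers bigger than `i` in blocks to the left of `i`'s block. -/
noncomputable def lcb (π : OP n k) (i : Fin n) : ℕ :=
  (univ.filter fun j => j < π.blk i ∧ i < π.closer j).card

/-- `rsb_i`: blocks to the right of `i`'s block with opener smaller and closer bigger
than `i`. -/
noncomputable def rsb (π : OP n k) (i : Fin n) : ℕ :=
  (univ.filter fun j => π.blk i < j ∧ π.opener j < i ∧ i < π.closer j).card

/-- `lsb_i`: blocks to the left of `i`'s block with opener smaller and closer bigger
than `i`. -/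
noncomputable def lsb (π : OP n k) (i : Fin n) : ℕ :=
  (univ.filter fun j => j < π.blk i ∧ π.opener j < i ∧ i < π.closer j).card

noncomputable def ROS (π : OP n k) : ℕ := ∑ i, π.ros i
noncomputable def ROB (π : OP n k) : ℕ := ∑ i, π.rob i
noncomputable def RCS (π : OP n k) : ℕ := ∑ i, π.rcs i
noncomputable def RCB (π : OP n k) : ℕ := ∑ i, π.rcb i
noncomputable def LOS (π : OP n k) : ℕ := ∑ i, π.los i
noncomputable def LOB (π : OP n k) : ℕ := ∑ i, π.lob i
noncomputable def LCS (π : OP n k) : ℕ := ∑ i, π.lcs i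
noncomputable def LCB (π : OP n k) : ℕ := ∑ i, π.lcb i
noncomputable def RSB (π : OP n k) : ℕ := ∑ i, π.rsb i
noncomputable def LSB (π : OP n k) : ℕ := ∑ i, π.lsb i

/-- The set of strict openers of `π`. -/
noncomputable def Oset (π : OP n k) : Finset (Fin n) :=
  univ.filter fun i => π.opener (π.blk i) = i ∧ 2 ≤ (π.1 (π.blk i)).card

/-- The set of singletons of `π`. -/
noncomputable def Sset (π : OP n k) : Finset (Fin n) :=
  univ.filter fun i => (π.1 (π.blk i)).card = 1

/-- The set of transients of `π`. -/
noncomputable def Tset (π : OP n k) : Finset (Fin n) :=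
  univ.filter fun i => π.opener (π.blk i) ≠ i ∧ π.closer (π.blk i) ≠ i

/-- The set of strict closers of `π`. -/
noncomputable def Cset (π : OP n k) : Finset (Fin n) :=
  univ.filter fun i => π.closer (π.blk i) = i ∧ 2 ≤ (π.1 (π.blk i)).card

/-- `inv π`: inversions of the permutation of `[k]` induced by the block ordering,
i.e. pairs of positions `j₁ < j₂` whose blocks have decreasing minima. -/
def inv (π : OP n k) : ℕ :=
  (univ.filter fun p : Fin k × Fin k => p.1 < p.2 ∧ π.opener p.2 < π.opener p.1).card

/-- `cinv π = C(k,2) - inv π`. -/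
def cinv (π : OP n k) : ℕ := k.choose 2 - π.inv

/-- `bInv π`: block inversions, i.e. pairs of positions `j₁ < j₂` with every element of
the `j₁`-st block greater than every element of the `j₂`-nd block. -/
def bInv (π : OP n k) : ℕ :=
  (univ.filter fun p : Fin k × Fin k => p.1 < p.2 ∧ π.closer p.2 < π.opener p.1).card

end OP

namespace OP

variable {n k : ℕ}

lemma mem_blk (π : OP n k) (i : Fin n) : i ∈ π.1 (π.blk i) := (π.2.2.2 i).choose_spec

lemma ne_of_mem_of_ne (π : OP n k) {i x : Fin n} {j : Fin k} (h : j ≠ π.blk i)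
    (hx : x ∈ π.1 j) : x ≠ i := by
  intro he
  subst he
  exact (Finset.disjoint_left.mp (π.2.2.1 j _ h) hx) (π.mem_blk x)

lemma split_card (π : OP n k) (i : Fin n) (f : Fin k → Fin n)
    (hf : ∀ j, j ≠ π.blk i → f j ≠ i) (P : Fin k → Prop) [DecidablePred P]
    (hP : ∀ j, P j → j ≠ π.blk i) :
    (univ.filter fun j => P j ∧ f j < i).card + (univ.filter fun j => P j ∧ i < f j).card
      = (univ.filter P).card := by
  have h1 : (univ.filter fun j => P j ∧ f j < i) = (univ.filter P).filter (fun j => f j < i) := by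
    simp [Finset.filter_filter]
  have h2 : (univ.filter fun j => P j ∧ i < f j) =
      (univ.filter P).filter (fun j => ¬ f j < i) := by
    rw [Finset.filter_filter]
    apply Finset.filter_congr
    intro j hj
    constructor
    · rintro ⟨hp, hlt⟩; exact ⟨hp, fun h => absurd (h.trans hlt) (lt_irrefl _)⟩
    · rintro ⟨hp, hnl⟩
      refine ⟨hp, ?_⟩
      rcases lt_trichotomy i (f j) with h | h | h
      · exact h
      · exact absurd h.symm (hf j (hP j hp))
      · exact absurd h hnl
  rw [h1, h2, Finset.card_filter_add_card_filter_not]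

lemma lt_gt_card (a : Fin k) :
    (univ.filter fun j => a < j).card + (univ.filter fun j => j < a).card = k - 1 := by
  have hdisj : Disjoint (univ.filter fun j => a < j) (univ.filter fun j => j < a) := by
    rw [Finset.disjoint_left]
    intro j hj hj'
    simp only [Finset.mem_filter, Finset.mem_univ, true_and] at hj hj'
    exact absurd (hj.trans hj') (lt_irrefl _)
  rw [← Finset.card_union_of_disjoint hdisj, ← Finset.filter_or]
  have h : (univ.filter fun j => a < j ∨ j < a) = (univ : Finset (Fin k)).erase a := by
    rw [← Finset.filter_ne']
    apply Finset.filter_congr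
    intro j _
    constructor
    · rintro (h | h) he <;> subst he <;> exact absurd h (lt_irrefl _)
    · intro h
      rcases lt_or_gt_of_ne h with h | h
      · exact Or.inr h
      · exact Or.inl h
  rw [h, Finset.card_erase_of_mem (Finset.mem_univ a), Finset.card_univ, Fintype.card_fin]

lemma key1 (π : OP n k) (i : Fin n) :
    π.ros i + π.rob i + (π.lcs i + π.lcb i) = k - 1 := by
  have ho : ∀ j, j ≠ π.blk i → π.opener j ≠ i :=
    fun j hj => π.ne_of_mem_of_ne hj (Finset.min'_mem _ _)
  have hc : ∀ j, j ≠ π.blk i → π.closer j ≠ i :=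
    fun j hj => π.ne_of_mem_of_ne hj (Finset.max'_mem _ _)
  have e1 := π.split_card i π.opener ho (fun j => π.blk i < j) (fun j h => (ne_of_lt h).symm)
  have e2 := π.split_card i π.closer hc (fun j => j < π.blk i) (fun j h => ne_of_lt h)
  have := lt_gt_card (k := k) (π.blk i)
  unfold ros rob lcs lcb
  omega

lemma key2 (π : OP n k) (i : Fin n) :
    π.lob i + π.los i + (π.rcb i + π.rcs i) = k - 1 := by
  have ho : ∀ j, j ≠ π.blk i → π.opener j ≠ i :=
    fun j hj => π.ne_of_mem_of_ne hj (Finset.min'_mem _ _)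
  have hc : ∀ j, j ≠ π.blk i → π.closer j ≠ i :=
    fun j hj => π.ne_of_mem_of_ne hj (Finset.max'_mem _ _)
  have e1 := π.split_card i π.opener ho (fun j => j < π.blk i) (fun j h => ne_of_lt h)
  have e2 := π.split_card i π.closer hc (fun j => π.blk i < j) (fun j h => (ne_of_lt h).symm)
  have := lt_gt_card (k := k) (π.blk i)
  unfold lob los rcb rcs
  omega

end OP

/-- `mak = lmak'` and `mak' = lmak` on ordered partitions of `[n]` with `k` blocks, where
`mak = ros + lcs`, `lmak = n(k-1) - (los + rcs)`, `mak' = lob + rcb`,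
`lmak' = n(k-1) - (lcb + rob)`. -/
theorem stmt3 {n k : ℕ} (π : OP n k) :
    ((π.ROS : ℤ) + π.LCS = (n : ℤ) * ((k : ℤ) - 1) - ((π.LCB : ℤ) + π.ROB)) ∧
    ((π.LOB : ℤ) + π.RCB = (n : ℤ) * ((k : ℤ) - 1) - ((π.LOS : ℤ) + π.RCS)) := by
  by_cases hn : n = 0
  · subst hn
    simp only [OP.ROS, OP.ROB, OP.LCS, OP.LCB, OP.LOS, OP.LOB, OP.RCS, OP.RCB,
      Finset.univ_eq_empty, Finset.sum_empty, Nat.cast_zero, Nat.cast_ofNat]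
    norm_num
  · have hk : 0 < k := (π.blk ⟨0, Nat.pos_of_ne_zero hn⟩).pos
    have s1 : ∑ i : Fin n, (π.ros i + π.rob i + (π.lcs i + π.lcb i)) = n * (k - 1) := by
      rw [Finset.sum_congr rfl fun i _ => π.key1 i]
      simp [mul_comm]
    have s2 : ∑ i : Fin n, (π.lob i + π.los i + (π.rcb i + π.rcs i)) = n * (k - 1) := by
      rw [Finset.sum_congr rfl fun i _ => π.key2 i]
      simp [mul_comm]
    simp only [Finset.sum_add_distrib] at s1 s2
    have e1 : π.ROS + π.ROB + (π.LCS + π.LCB) = n * (k - 1) := s1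
    have e2 : π.LOB + π.LOS + (π.RCB + π.RCS) = n * (k - 1) := s2
    have hcast : (n : ℤ) * ((k : ℤ) - 1) = ((n * (k - 1) : ℕ) : ℤ) := by
      push_cast [Nat.cast_sub hk]
      ring
    rw [hcast]
    constructor <;> omega
end

section
/- For every ordered partition π of [n] into k blocks: (mak + bInv)(π) = (lcs + rcs)(π) + rsb(T ∪ C)(π) + inv(π). -/
open Finset

namespace OP

variable {n k : ℕ}

lemma blk_eq_of_mem (π : OP n k) {i : Fin n} {j : Fin k} (h : i ∈ π.1 j) : π.blk i = j := by
  by_contra hne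
  exact Finset.disjoint_left.mp (π.2.2.1 _ _ hne) (π.mem_blk i) h

lemma opener_mem (π : OP n k) (j : Fin k) : π.opener j ∈ π.1 j := Finset.min'_mem _ _

lemma closer_mem (π : OP n k) (j : Fin k) : π.closer j ∈ π.1 j := Finset.max'_mem _ _

lemma blk_opener (π : OP n k) (j : Fin k) : π.blk (π.opener j) = j :=
  π.blk_eq_of_mem (π.opener_mem j)

lemma opener_le (π : OP n k) {i : Fin n} {j : Fin k} (h : i ∈ π.1 j) : π.opener j ≤ i :=
  Finset.min'_le _ _ h

lemma le_closer (π : OP n k) {i : Fin n} {j : Fin k} (h : i ∈ π.1 j) : i ≤ π.closer j :=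
  Finset.le_max' _ _ h

lemma closer_ne (π : OP n k) {i : Fin n} {j : Fin k} (h : j ≠ π.blk i) : π.closer j ≠ i := by
  intro he
  exact h ((he ▸ π.blk_eq_of_mem (π.closer_mem j)).symm)

lemma card_eq_one_of_opener_eq_closer (π : OP n k) (j : Fin k)
    (h : π.opener j = π.closer j) : (π.1 j).card = 1 := by
  rw [Finset.card_eq_one]
  exact ⟨π.opener j, Finset.eq_singleton_iff_unique_mem.mpr
    ⟨π.opener_mem j, fun x hx => le_antisymm (h ▸ π.le_closer hx) (π.opener_le hx)⟩⟩

/-- `O ∪ S` is the set of elements that are openers of their block. -/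
lemma OS_eq (π : OP n k) :
    π.Oset ∪ π.Sset = univ.filter fun i => π.opener (π.blk i) = i := by
  ext i
  simp only [Oset, Sset, Finset.mem_union, Finset.mem_filter, Finset.mem_univ, true_and]
  constructor
  · rintro (⟨h, _⟩ | h)
    · exact h
    · obtain ⟨a, ha⟩ := Finset.card_eq_one.mp h
      have hi : i ∈ π.1 (π.blk i) := π.mem_blk i
      rw [ha, Finset.mem_singleton] at hi
      subst hi
      have ho := π.opener_mem (π.blk i)
      rw [ha, Finset.mem_singleton] at ho
      exact ho
  · intro h
    have h1 : 1 ≤ (π.1 (π.blk i)).card := Finset.card_pos.mpr (π.2.1 _)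
    rcases eq_or_lt_of_le h1 with h1 | h1
    · exact Or.inr h1.symm
    · exact Or.inl ⟨h, h1⟩

/-- `T ∪ C` is the set of elements that are not openers of their block. -/
lemma TC_eq (π : OP n k) :
    π.Tset ∪ π.Cset = univ.filter fun i => π.opener (π.blk i) ≠ i := by
  ext i
  simp only [Tset, Cset, Finset.mem_union, Finset.mem_filter, Finset.mem_univ, true_and]
  constructor
  · rintro (⟨h, _⟩ | ⟨h, h2⟩)
    · exact h
    · intro ho
      have := π.card_eq_one_of_opener_eq_closer (π.blk i) (ho.trans h.symm)
      omega
  · intro h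
    by_cases hc : π.closer (π.blk i) = i
    · refine Or.inr ⟨hc, ?_⟩
      have h1 : 1 ≤ (π.1 (π.blk i)).card := Finset.card_pos.mpr (π.2.1 _)
      rcases eq_or_lt_of_le h1 with h1 | h1
      · obtain ⟨a, ha⟩ := Finset.card_eq_one.mp h1.symm
        exfalso
        apply h
        have hi := π.mem_blk i
        have ho := π.opener_mem (π.blk i)
        rw [ha, Finset.mem_singleton] at hi ho
        rw [ho, hi]
      · exact h1
    · exact Or.inl ⟨h, hc⟩

/-- Summing a block-statistic over the openers reindexes as a sum over blocks. -/
lemma sum_opener_filter (π : OP n k) (f : Fin k → Fin n → ℕ) :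
    ∑ i ∈ univ.filter (fun i => π.opener (π.blk i) = i), f (π.blk i) i
      = ∑ j, f j (π.opener j) := by
  refine Finset.sum_nbij' (fun i => π.blk i) (fun j => π.opener j)
    (fun a _ => Finset.mem_univ _) (fun j _ => ?_) (fun a ha => ?_) (fun j _ => π.blk_opener j)
    (fun a ha => ?_)
  · simp only [Finset.mem_filter, Finset.mem_univ, true_and, π.blk_opener j]
  · simp only [Finset.mem_filter, Finset.mem_univ, true_and] at ha
    exact ha
  · simp only [Finset.mem_filter, Finset.mem_univ, true_and] at ha
    rw [ha]

lemma ros_eq_rcs_add_rsb (π : OP n k) (i : Fin n) : π.ros i = π.rcs i + π.rsb i := by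
  unfold ros rcs rsb
  rw [← Finset.card_union_of_disjoint]
  · congr 1
    ext j
    simp only [Finset.mem_union, Finset.mem_filter, Finset.mem_univ, true_and]
    constructor
    · rintro ⟨hj, ho⟩
      have hne : π.closer j ≠ i := π.closer_ne hj.ne'
      rcases lt_trichotomy (π.closer j) i with h | h | h
      · exact Or.inl ⟨hj, h⟩
      · exact absurd h hne
      · exact Or.inr ⟨hj, ho, h⟩
    · rintro (⟨hj, hc⟩ | ⟨hj, ho, _⟩)
      · exact ⟨hj, lt_of_le_of_lt (π.opener_le (π.closer_mem j)) hc⟩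
      · exact ⟨hj, ho⟩
  · rw [Finset.disjoint_left]
    intro j hj1 hj2
    simp only [Finset.mem_filter, Finset.mem_univ, true_and] at hj1 hj2
    exact absurd hj2.2.2 (asymm hj1.2)

lemma inv_eq_sum (π : OP n k) :
    π.inv = ∑ j₁, (univ.filter fun j₂ => j₁ < j₂ ∧ π.opener j₂ < π.opener j₁).card := by
  simp only [inv, Finset.card_filter, Fintype.sum_prod_type]

lemma bInv_eq_sum (π : OP n k) :
    π.bInv = ∑ j₁, (univ.filter fun j₂ => j₁ < j₂ ∧ π.closer j₂ < π.opener j₁).card := by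
  simp only [bInv, Finset.card_filter, Fintype.sum_prod_type]

end OP

/-- `(mak + bInv)(π) = (lcs + rcs)(π) + rsb(T ∪ C)(π) + inv(π)`, where `mak = ros + lcs`. -/
theorem stmt6 {n k : ℕ} (π : OP n k) :
    (π.ROS + π.LCS) + π.bInv =
      (π.LCS + π.RCS) + (∑ i ∈ π.Tset ∪ π.Cset, π.rsb i) + π.inv := by
  classical
  have hros : ∑ i ∈ univ.filter (fun i => π.opener (π.blk i) = i), π.ros i = π.inv := by
    rw [π.inv_eq_sum]
    exact π.sum_opener_filter
      (fun j₁ x => (univ.filter fun j₂ => j₁ < j₂ ∧ π.opener j₂ < x).card)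
  have hrcs : ∑ i ∈ univ.filter (fun i => π.opener (π.blk i) = i), π.rcs i = π.bInv := by
    rw [π.bInv_eq_sum]
    exact π.sum_opener_filter
      (fun j₁ x => (univ.filter fun j₂ => j₁ < j₂ ∧ π.closer j₂ < x).card)
  have hROS : π.ROS = π.inv + ∑ i ∈ univ.filter (fun i => ¬ π.opener (π.blk i) = i), π.ros i := by
    rw [OP.ROS, ← Finset.sum_filter_add_sum_filter_not univ
      (fun i => π.opener (π.blk i) = i) π.ros, hros]
  have hRCS : π.RCS = π.bInv + ∑ i ∈ univ.filter (fun i => ¬ π.opener (π.blk i) = i), π.rcs i := by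
    rw [OP.RCS, ← Finset.sum_filter_add_sum_filter_not univ
      (fun i => π.opener (π.blk i) = i) π.rcs, hrcs]
  have hTC : ∑ i ∈ π.Tset ∪ π.Cset, π.rsb i
      = ∑ i ∈ univ.filter (fun i => ¬ π.opener (π.blk i) = i), π.rsb i := by
    rw [π.TC_eq]
  have hsplit : ∑ i ∈ univ.filter (fun i => ¬ π.opener (π.blk i) = i), π.ros i
      = (∑ i ∈ univ.filter (fun i => ¬ π.opener (π.blk i) = i), π.rcs i)
        + ∑ i ∈ univ.filter (fun i => ¬ π.opener (π.blk i) = i), π.rsb i := by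
    rw [← Finset.sum_add_distrib]
    exact Finset.sum_congr rfl fun i _ => π.ros_eq_rcs_add_rsb i
  rw [hROS, hRCS, hTC]
  omega
end

section
/- For 0 ≤ m ≤ n and q-analogues with two parameters, Σ_{k=0}^{m} (−1)^{m−k} x^{binom(k,2)} y^{binom(n−k,2)} [n choose k]_{x,y} Π_{i=0}^{k−1}(1 − a x^i [n−i]_{x,y}) Π_{i=k}^{m−1}(−a x^i [n−i]_{x,y}) = x^{binom(m,2)} y^{binom(n−m,2)} [n choose m]_{x,y} Π_{i=1}^{m}(1 − a x^i [n−i]_{x,y}). -/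
noncomputable section

/-- The field `ℚ(a,x,y)` of rational functions in three variables. -/
abbrev K3 : Type := FractionRing (MvPolynomial (Fin 3) ℚ)

def a3 : K3 := algebraMap (MvPolynomial (Fin 3) ℚ) K3 (MvPolynomial.X 0)
def x3 : K3 := algebraMap (MvPolynomial (Fin 3) ℚ) K3 (MvPolynomial.X 1)
def y3 : K3 := algebraMap (MvPolynomial (Fin 3) ℚ) K3 (MvPolynomial.X 2)

/-- The `(x,y)`-integer `[m]_{x,y} = ∑_{j=0}^{m-1} x^j y^{m-1-j}`. -/
def pqint (m : ℕ) : K3 := ∑ j ∈ Finset.range m, x3 ^ j * y3 ^ (m - 1 - j)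

/-- The `(x,y)`-factorial `[m]_{x,y}!`. -/
def pqfact (m : ℕ) : K3 := ∏ j ∈ Finset.Icc 1 m, pqint j

/-- The `(x,y)`-binomial coefficient `[n choose k]_{x,y}`. -/
def pqbinom (n k : ℕ) : K3 := pqfact n / (pqfact k * pqfact (n - k))

lemma pqint_ne_zero {m : ℕ} (hm : 0 < m) : pqint m ≠ 0 := by
  have heq : pqint m = algebraMap (MvPolynomial (Fin 3) ℚ) K3
      (∑ j ∈ Finset.range m, MvPolynomial.X 1 ^ j * MvPolynomial.X 2 ^ (m - 1 - j)) := by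
    simp [pqint, x3, y3, map_sum]
  rw [heq]
  intro hzero
  rw [show (0:K3) = algebraMap (MvPolynomial (Fin 3) ℚ) K3 0 by simp] at hzero
  have hp := IsFractionRing.injective (MvPolynomial (Fin 3) ℚ) K3 hzero
  have := congrArg (MvPolynomial.eval (fun _ => (1:ℚ))) hp
  simp at this
  omega

lemma pqfact_ne_zero (m : ℕ) : pqfact m ≠ 0 := by
  rw [pqfact, Finset.prod_ne_zero_iff]
  intro j hj
  exact pqint_ne_zero (by simp at hj; omega)

lemma pqfact_succ (m : ℕ) : pqfact (m + 1) = pqfact m * pqint (m + 1) := by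
  rw [pqfact, pqfact, Finset.prod_Icc_succ_top (by omega)]

lemma pqbinom_succ (n m : ℕ) (h : m < n) :
    pqbinom n (m + 1) = pqbinom n m * pqint (n - m) / pqint (m + 1) := by
  have h1 : n - m = (n - (m + 1)) + 1 := by omega
  rw [pqbinom, pqbinom, pqfact_succ m, h1, pqfact_succ (n - (m+1))]
  rw [show n - (m+1) + 1 = n - m from h1.symm]
  have h2 := pqfact_ne_zero m
  have h3 := pqfact_ne_zero (n - (m+1))
  have h4 := pqint_ne_zero (show 0 < m + 1 by omega)
  have h5 := pqint_ne_zero (show 0 < n - m by omega)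
  field_simp

lemma pqint_split' (m s : ℕ) :
    pqint (m + 1 + s) = y3 ^ s * pqint (m + 1) + x3 ^ (m + 1) * pqint s := by
  rw [pqint, Finset.sum_range_add]
  congr 1
  · rw [pqint, Finset.mul_sum]
    apply Finset.sum_congr rfl
    intro j hj
    simp only [Finset.mem_range] at hj
    rw [show m + 1 + s - 1 - j = s + (m + 1 - 1 - j) by omega, pow_add]
    ring
  · rw [pqint, Finset.mul_sum]
    apply Finset.sum_congr rfl
    intro j hj
    simp only [Finset.mem_range] at hj
    rw [show m + 1 + s - 1 - (m + 1 + j) = s - 1 - j by omega]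
    ring

lemma pqint_split (n m : ℕ) (h : m < n) :
    pqint n = y3 ^ (n - (m + 1)) * pqint (m + 1) + x3 ^ (m + 1) * pqint (n - (m + 1)) := by
  have := pqint_split' m (n - (m + 1))
  rwa [show m + 1 + (n - (m + 1)) = n by omega] at this

lemma prod_range_eq_Icc (m : ℕ) (f : ℕ → K3) :
    ∏ i ∈ Finset.range (m + 1), f i = f 0 * ∏ i ∈ Finset.Icc 1 m, f i := by
  rw [Finset.prod_range_succ', show Finset.Icc 1 m = Finset.Ico 1 (m + 1) by
    exact (Finset.Ico_add_one_right_eq_Icc 1 m).symm ▸ rfl, Finset.prod_Ico_eq_prod_range]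
  simp only [Nat.add_sub_cancel, mul_comm]
  congr 1
  exact Finset.prod_congr rfl fun i _ => by rw [Nat.add_comm]


/-- Key summation lemma: for `0 ≤ m ≤ n`,
`∑_{k=0}^m (-1)^{m-k} x^{C(k,2)} y^{C(n-k,2)} [n choose k]_{x,y}
  ∏_{i=0}^{k-1}(1 - a x^i [n-i]_{x,y}) ∏_{i=k}^{m-1}(-a x^i [n-i]_{x,y})
  = x^{C(m,2)} y^{C(n-m,2)} [n choose m]_{x,y} ∏_{i=1}^m (1 - a x^i [n-i]_{x,y})`. -/
theorem stmt9 (n m : ℕ) (h : m ≤ n) :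
    ∑ k ∈ Finset.range (m + 1),
      (-1 : K3) ^ (m - k) * x3 ^ k.choose 2 * y3 ^ (n - k).choose 2 * pqbinom n k *
        (∏ i ∈ Finset.range k, (1 - a3 * x3 ^ i * pqint (n - i))) *
        (∏ i ∈ Finset.Ico k m, (-(a3 * x3 ^ i * pqint (n - i)))) =
      x3 ^ m.choose 2 * y3 ^ (n - m).choose 2 * pqbinom n m *
        ∏ i ∈ Finset.Icc 1 m, (1 - a3 * x3 ^ i * pqint (n - i)) := by
  induction m with
  | zero => simp
  | succ m ih =>
      have hm : m < n := by omega
      have ih' := ih (by omega)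
      rw [Finset.sum_range_succ]
      have hsum : ∑ k ∈ Finset.range (m + 1),
          (-1 : K3) ^ (m + 1 - k) * x3 ^ k.choose 2 * y3 ^ (n - k).choose 2 * pqbinom n k *
            (∏ i ∈ Finset.range k, (1 - a3 * x3 ^ i * pqint (n - i))) *
            (∏ i ∈ Finset.Ico k (m + 1), (-(a3 * x3 ^ i * pqint (n - i)))) =
          (a3 * x3 ^ m * pqint (n - m)) * ∑ k ∈ Finset.range (m + 1),
          (-1 : K3) ^ (m - k) * x3 ^ k.choose 2 * y3 ^ (n - k).choose 2 * pqbinom n k *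
            (∏ i ∈ Finset.range k, (1 - a3 * x3 ^ i * pqint (n - i))) *
            (∏ i ∈ Finset.Ico k m, (-(a3 * x3 ^ i * pqint (n - i)))) := by
        rw [Finset.mul_sum]
        apply Finset.sum_congr rfl
        intro k hk
        simp only [Finset.mem_range] at hk
        rw [Finset.prod_Ico_succ_top (by omega : k ≤ m),
          show m + 1 - k = (m - k) + 1 by omega, pow_succ]
        ring
      rw [hsum, ih']
      simp only [Nat.sub_self, pow_zero, Finset.Ico_self, Finset.prod_empty, mul_one, one_mul]
      rw [prod_range_eq_Icc m (fun i => 1 - a3 * x3 ^ i * pqint (n - i))]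
      rw [Finset.prod_Icc_succ_top (by omega : 1 ≤ m + 1)]
      rw [show (m + 1).choose 2 = m.choose 2 + m by
        rw [Nat.choose_succ_succ]; simp [Nat.choose_one_right]; omega]
      rw [show (n - m).choose 2 = (n - (m + 1)).choose 2 + (n - (m + 1)) by
        rw [show n - m = (n - (m + 1)) + 1 by omega, Nat.choose_succ_succ]
        simp [Nat.choose_one_right]; omega]
      simp only [pow_zero, Nat.sub_zero, one_mul]
      rw [pqbinom_succ n m hm, pqint_split n m hm]
      have h4 := pqint_ne_zero (show 0 < m + 1 by omega)
      simp only [pow_add]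
      field_simp
      ring
end
end
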